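/- arXiv:1702.01675 — 2 statements merged into one kernel-verified Lean document; each statement's English description precedes it below -/
import Mathlib

section
/- Let p ∈ (0, 1/2] and let H, G be as follows: H(x,y) = p·x·log_p(x) + (1-p)·y·log_p(y) + p·y - p·x and G(x,y) = (p·x + (1-p)·y)·log_p(p·x + (1-p)·y), with 0·log_p(0) = 0. Then for all 0 ≤ x ≤ y ≤ 1, H(x,y) - G(x,y) ≥ (1-p)·(y - x)·log_p( (1-p)·y / (p·x + (1-p)·y) ) (where the right-hand side is interpreted as 0 when y = 0). -/
open Real

lemma mul_log_le_one_sub_mul_log_one_sub {p : ℝ} (hp : 0 < p) (hp2 : p ≤ 1 / 2) :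
    p * log p ≤ (1 - p) * log (1 - p) := by
  have hq : 0 < 1 - p := by linarith
  -- `log t ≤ t - 1` at `t = p / (1 - p)` and at `t = 1 / (1 - p)`; the weights `p` and `1 - 2p`
  -- make the right-hand sides cancel.
  have hratio : log p - log (1 - p) ≤ p / (1 - p) - 1 := by
    rw [← log_div hp.ne' hq.ne']
    exact log_le_sub_one_of_pos (by positivity)
  have hinv : -log (1 - p) ≤ p / (1 - p) := by
    have h := log_le_sub_one_of_pos (inv_pos.mpr hq)
    rw [log_inv] at h
    calc -log (1 - p) ≤ (1 - p)⁻¹ - 1 := h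
      _ = p / (1 - p) := by field_simp; ring
  have hcancel : p * (p / (1 - p) - 1) + (1 - 2 * p) * (p / (1 - p)) = 0 := by
    field_simp; ring
  nlinarith [mul_le_mul_of_nonneg_left hratio hp.le,
    mul_le_mul_of_nonneg_left hinv (by linarith : (0 : ℝ) ≤ 1 - 2 * p)]

lemma mul_weighted_log_le_mul_log_add {p q x y : ℝ} (hp : 0 ≤ p) (hq : 0 ≤ q) (hpq : p + q = 1)
    (hx : 0 ≤ x) (hy : 0 < y) :
    x * (p * log x + q * log y) ≤ x * log (p * x + q * y) := by
  rcases hx.eq_or_lt with rfl | hx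
  · simp
  exact mul_le_mul_of_nonneg_left
    (by simpa using strictConcaveOn_log_Ioi.concaveOn.2 hx hy hp hq hpq) hx.le

theorem H_sub_G_lower_general (p : ℝ) (hp : 0 < p) (hp2 : p ≤ 1/2)
    (H G : ℝ → ℝ → ℝ)
    (hH : ∀ x y, H x y = p * x * (Real.log x / Real.log p)
      + (1 - p) * y * (Real.log y / Real.log p) + p * y - p * x)
    (hG : ∀ x y, G x y = (p * x + (1 - p) * y) *
      (Real.log (p * x + (1 - p) * y) / Real.log p))
    (x y : ℝ) (hx : 0 ≤ x) (hxy : x ≤ y) :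
    H x y - G x y ≥ (1 - p) * (y - x) *
      (Real.log ((1 - p) * y / (p * x + (1 - p) * y)) / Real.log p) := by
  have hq : 0 < 1 - p := by linarith
  have hlogp : log p < 0 := log_neg hp (by linarith)
  rcases (hx.trans hxy).eq_or_lt with rfl | hy
  · obtain rfl : x = 0 := le_antisymm hxy hx
    simp [hH, hG]
  have hs : 0 < p * x + (1 - p) * y := by positivity
  -- Multiplied by `log p`, the difference splits into an AM-GM term and a multiple of
  -- `p log p - (1 - p) log (1 - p)`.
  have hsplit : H x y - G x y - (1 - p) * (y - x) *
      (log ((1 - p) * y / (p * x + (1 - p) * y)) / log p) =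
      (x * (p * log x + (1 - p) * log y - log (p * x + (1 - p) * y))
        + (y - x) * (p * log p - (1 - p) * log (1 - p))) / log p := by
    rw [hH, hG, log_div (by positivity) hs.ne', log_mul hq.ne' hy.ne']
    field_simp [hlogp.ne]
    ring
  have hamgm := mul_weighted_log_le_mul_log_add hp.le hq.le (by ring) hx hy
  have hent := mul_log_le_one_sub_mul_log_one_sub hp hp2
  rw [ge_iff_le, ← sub_nonneg, hsplit]
  refine div_nonneg_of_nonpos (add_nonpos ?_ ?_) hlogp.le
  · linarith [mul_sub x (p * log x + (1 - p) * log y) (log (p * x + (1 - p) * y))]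
  · exact mul_nonpos_of_nonneg_of_nonpos (sub_nonneg.2 hxy) (by linarith)

theorem H_sub_G_lower (p : ℝ) (hp : 0 < p) (hp2 : p ≤ 1/2)
    (H G : ℝ → ℝ → ℝ)
    (hH : ∀ x y, H x y = p * x * (Real.log x / Real.log p)
      + (1 - p) * y * (Real.log y / Real.log p) + p * y - p * x)
    (hG : ∀ x y, G x y = (p * x + (1 - p) * y) *
      (Real.log (p * x + (1 - p) * y) / Real.log p))
    (x y : ℝ) (hx : 0 ≤ x) (hxy : x ≤ y) (hy1 : y ≤ 1) :
    H x y - G x y ≥ (1 - p) * (y - x) *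
      (Real.log ((1 - p) * y / (p * x + (1 - p) * y)) / Real.log p) :=
  H_sub_G_lower_general p hp hp2 H G hH hG x y hx hxy
end

section
/- Let p ∈ (0,1) and let f : {0,1}^n → {0,1} be a monotone increasing Boolean function (i.e., x_i ≤ y_i for all i implies f(x) ≤ f(y)). Then p·I^p[f] ≥ μ_p(f)·log_p(μ_p(f)). -/
open Finset

/-- The `p`-biased weight of a point of the discrete cube. -/
noncomputable def biasedWeight (p : ℝ) {n : ℕ} (x : Fin n → Bool) : ℝ :=
  ∏ i, if x i then p else 1 - p

/-- The `p`-biased measure (expectation) of a Boolean function. -/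
noncomputable def biasedMeasure (p : ℝ) {n : ℕ} (f : (Fin n → Bool) → Bool) : ℝ :=
  ∑ x : Fin n → Bool, biasedWeight p x * (if f x then 1 else 0)

/-- The `p`-biased influence of coordinate `i` on a Boolean function. -/
noncomputable def influence (p : ℝ) {n : ℕ} (f : (Fin n → Bool) → Bool) (i : Fin n) : ℝ :=
  ∑ x : Fin n → Bool,
    biasedWeight p x * (if f x ≠ f (Function.update x i (!x i)) then 1 else 0)

/-- The total `p`-biased influence of a Boolean function. -/
noncomputable def totalInfluence (p : ℝ) {n : ℕ} (f : (Fin n → Bool) → Bool) : ℝ :=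
  ∑ i, influence p f i

/-! Induct on `n`, splitting the cube along the first coordinate. For monotone `f` the two
restrictions satisfy `f₀ ≤ f₁`, so with `a = μ_p(f₀) ≤ b = μ_p(f₁)` the edges in direction `0`
contribute exactly `b - a`, and the induction step reduces to the two-point inequality
`(1-p) a log a + p b log b + p (b-a) log p ≤ m log m`, where `m = (1-p) a + p b`.
Its left side is `∑ cᵢ log zᵢ` with weights `(1-p)a, pa, p(b-a)` summing to `m` at the points
`a, b, pb`; bounding each `log (zᵢ / m) ≤ zᵢ / m - 1` leaves the error `-p(1-p)a(b-a)/m ≤ 0`. -/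

open Real

lemma mul_log_le_mul_log_add {c z m : ℝ} (hc : 0 ≤ c) (hz : 0 < z ∨ c = 0) (hm : 0 < m) :
    c * log z ≤ c * log m + c * (z / m - 1) := by
  rcases hz with hz | rfl
  · calc c * log z = c * log m + c * log (z / m) := by rw [log_div hz.ne' hm.ne']; ring
      _ ≤ c * log m + c * (z / m - 1) := by gcongr; exact log_le_sub_one_of_pos (by positivity)
  · simp

lemma mul_log_two_point_le {p a b : ℝ} (hp : 0 < p) (hp1 : p ≤ 1) (ha : 0 ≤ a) (hab : a ≤ b) :
    (1 - p) * (a * log a) + p * (b * log b) + p * (b - a) * log p ≤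
      ((1 - p) * a + p * b) * log ((1 - p) * a + p * b) := by
  rcases (ha.trans hab).eq_or_lt with hb | hb
  · obtain rfl : b = 0 := hb.symm
    obtain rfl : a = 0 := le_antisymm hab ha
    simp
  obtain ⟨m, hm_def⟩ : ∃ m, m = (1 - p) * a + p * b := ⟨_, rfl⟩
  rw [← hm_def]
  have hm : 0 < m := by nlinarith [mul_pos hp hb, mul_nonneg (sub_nonneg.2 hp1) ha]
  have h1 := mul_log_le_mul_log_add (z := a) (mul_nonneg (sub_nonneg.2 hp1) ha)
    (ha.lt_or_eq.imp_right fun h => by rw [← h, mul_zero]) hm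
  have h2 := mul_log_le_mul_log_add (c := p * a) (mul_nonneg hp.le ha) (Or.inl hb) hm
  have h3 := mul_log_le_mul_log_add (c := p * (b - a)) (mul_nonneg hp.le (sub_nonneg.2 hab))
    (Or.inl (mul_pos hp hb)) hm
  rw [log_mul hp.ne' hb.ne'] at h3
  have hgap : (1 - p) * a * (a / m - 1) + p * a * (b / m - 1) + p * (b - a) * (p * b / m - 1)
      = -(p * (1 - p) * a * (b - a)) / m := by
    field_simp
    rw [hm_def]
    ring
  have hgap_nonpos : -(p * (1 - p) * a * (b - a)) / m ≤ 0 := by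
    have := sub_nonneg.2 hp1
    have := sub_nonneg.2 hab
    exact div_nonpos_of_nonpos_of_nonneg (neg_nonpos.2 (by positivity)) hm.le
  linear_combination h1 + h2 + h3 + hgap_nonpos + hgap - log m * hm_def

section Decomposition

variable {n : ℕ}

def restrictHead (f : (Fin (n + 1) → Bool) → Bool) (b : Bool) : (Fin n → Bool) → Bool :=
  fun x => f (Fin.cons b x)

lemma sum_cube_succ (g : (Fin (n + 1) → Bool) → ℝ) :
    ∑ y, g y = ∑ x : Fin n → Bool, (g (Fin.cons false x) + g (Fin.cons true x)) := by
  rw [← (Fin.consEquiv fun _ => Bool).sum_comp g, Fintype.sum_prod_type_right]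
  simp [Fin.consEquiv, add_comm]

lemma biasedWeight_cons (p : ℝ) (b : Bool) (x : Fin n → Bool) :
    biasedWeight p (Fin.cons b x) = (if b then p else 1 - p) * biasedWeight p x := by
  simp [biasedWeight, Fin.prod_univ_succ]

lemma sum_biasedWeight_mul_succ (p : ℝ) (g : (Fin (n + 1) → Bool) → ℝ) :
    ∑ y, biasedWeight p y * g y =
      (1 - p) * ∑ x, biasedWeight p x * g (Fin.cons false x) +
        p * ∑ x, biasedWeight p x * g (Fin.cons true x) := by
  simp only [sum_cube_succ, biasedWeight_cons, mul_sum, ← sum_add_distrib]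
  refine sum_congr rfl fun x _ => ?_
  simp only [Bool.false_eq_true, if_false, if_true]
  ring

lemma biasedMeasure_cons (p : ℝ) (f : (Fin (n + 1) → Bool) → Bool) :
    biasedMeasure p f =
      (1 - p) * biasedMeasure p (restrictHead f false) + p * biasedMeasure p (restrictHead f true) :=
  sum_biasedWeight_mul_succ p _

lemma influence_zero (p : ℝ) (f : (Fin (n + 1) → Bool) → Bool) :
    influence p f 0 = ∑ x, biasedWeight p x *
      (if restrictHead f false x ≠ restrictHead f true x then 1 else 0) := by
  simp only [influence, sum_biasedWeight_mul_succ, Fin.cons_zero, Fin.update_cons_zero,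
    Bool.not_false, Bool.not_true, ne_comm (a := f (Fin.cons true _))]
  rw [← add_mul, sub_add_cancel, one_mul]
  rfl

lemma influence_succ (p : ℝ) (f : (Fin (n + 1) → Bool) → Bool) (i : Fin n) :
    influence p f i.succ =
      (1 - p) * influence p (restrictHead f false) i + p * influence p (restrictHead f true) i := by
  simp only [influence, sum_biasedWeight_mul_succ, Fin.cons_succ, ← Fin.cons_update]
  rfl

lemma totalInfluence_cons (p : ℝ) (f : (Fin (n + 1) → Bool) → Bool) :
    totalInfluence p f =
      (1 - p) * totalInfluence p (restrictHead f false) +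
        p * totalInfluence p (restrictHead f true) +
        ∑ x, biasedWeight p x *
          (if restrictHead f false x ≠ restrictHead f true x then 1 else 0) := by
  simp only [totalInfluence, Fin.sum_univ_succ, influence_zero, influence_succ, sum_add_distrib,
    ← mul_sum]
  ring

end Decomposition

section Monotone

variable {p : ℝ} {n : ℕ}

lemma biasedWeight_nonneg (hp : 0 ≤ p) (hp1 : p ≤ 1) (x : Fin n → Bool) :
    0 ≤ biasedWeight p x :=
  prod_nonneg fun i _ => by split <;> linarith

lemma biasedMeasure_nonneg (hp : 0 ≤ p) (hp1 : p ≤ 1) (f : (Fin n → Bool) → Bool) :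
    0 ≤ biasedMeasure p f :=
  sum_nonneg fun x _ => mul_nonneg (biasedWeight_nonneg hp hp1 x) (by split <;> norm_num)

lemma sum_biasedWeight_mul_ne_of_le {f g : (Fin n → Bool) → Bool} (hfg : f ≤ g) :
    ∑ x, biasedWeight p x * (if f x ≠ g x then 1 else 0) =
      biasedMeasure p g - biasedMeasure p f := by
  rw [biasedMeasure, biasedMeasure, ← sum_sub_distrib]
  refine sum_congr rfl fun x _ => ?_
  have := hfg x
  cases hf : f x <;> cases hg : g x <;> simp_all [Bool.le_iff_imp]

lemma biasedMeasure_mono (hp : 0 ≤ p) (hp1 : p ≤ 1) {f g : (Fin n → Bool) → Bool} (hfg : f ≤ g) :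
    biasedMeasure p f ≤ biasedMeasure p g := by
  rw [← sub_nonneg, ← sum_biasedWeight_mul_ne_of_le hfg]
  exact sum_nonneg fun x _ => mul_nonneg (biasedWeight_nonneg hp hp1 x) (by split <;> norm_num)

lemma Monotone.restrictHead {f : (Fin (n + 1) → Bool) → Bool} (hf : Monotone f) (b : Bool) :
    Monotone (restrictHead f b) :=
  fun _ _ hxy => hf (Fin.cons_le_cons.2 ⟨le_rfl, hxy⟩)

lemma restrictHead_false_le {f : (Fin (n + 1) → Bool) → Bool} (hf : Monotone f) :
    restrictHead f false ≤ restrictHead f true :=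
  fun _ => hf (Fin.cons_le_cons.2 ⟨Bool.false_le _, le_rfl⟩)

theorem mul_totalInfluence_mul_log_le (hp : 0 < p) (hp1 : p ≤ 1) {f : (Fin n → Bool) → Bool}
    (hf : Monotone f) :
    p * totalInfluence p f * log p ≤ biasedMeasure p f * log (biasedMeasure p f) := by
  induction n with
  | zero =>
    simp only [totalInfluence, univ_eq_empty, sum_empty, biasedMeasure, Fintype.sum_unique,
      biasedWeight, prod_empty, one_mul]
    split <;> simp
  | succ n ih =>
    have hle := restrictHead_false_le hf
    have h0 := mul_le_mul_of_nonneg_left (ih (hf.restrictHead false)) (sub_nonneg.2 hp1)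
    have h1 := mul_le_mul_of_nonneg_left (ih (hf.restrictHead true)) hp.le
    have key := mul_log_two_point_le hp hp1 (biasedMeasure_nonneg hp.le hp1 _)
      (biasedMeasure_mono hp.le hp1 hle)
    rw [biasedMeasure_cons, totalInfluence_cons, sum_biasedWeight_mul_ne_of_le hle]
    linear_combination h0 + h1 + key

end Monotone

theorem biased_edge_isoperimetric_inequality_monotone (p : ℝ) (hp : 0 < p) (hp1 : p < 1)
    (n : ℕ) (f : (Fin n → Bool) → Bool)
    (hmono : ∀ x y : Fin n → Bool, (∀ i, x i ≤ y i) → f x ≤ f y) :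
    p * totalInfluence p f ≥
      biasedMeasure p f * (Real.log (biasedMeasure p f) / Real.log p) := by
  rw [ge_iff_le, mul_div_assoc', div_le_iff_of_neg (log_neg hp hp1)]
  exact mul_totalInfluence_mul_log_le hp hp1.le fun x y => hmono x y
end
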